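/- Let c_1, c_2 ≥ 1 and let v be the outer commutator word [[…[x_1,x_2],…,x_{c_1+1}], […[y_1,y_2],…,y_{c_2+1}]] in c_1+c_2+2 distinct variables defining the variety [𝔑_{c_1},𝔑_{c_2}]. Then for any group G with free presentation G ≅ F/R (F a free group, R a normal subgroup), the Baer invariant of G with respect to [𝔑_{c_1},𝔑_{c_2}] satisfies [𝔑_{c_1},𝔑_{c_2}]M(G) = (R ∩ v(F))/[R v* F] ≅ (R ∩ [γ_{c_1+1}(F), γ_{c_2+1}(F)]) / ([R, _{c_1}F, γ_{c_2+1}(F)]·[R, _{c_2}F, γ_{c_1+1}(F)]). -/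

import Mathlib

/-!
For a commutator `v = ⁅u, w⁆` of words in disjoint sets of variables, `v(G) = ⁅u(G), w(G)⁆` and
`[R v* G] = ⁅[R u* G], w(G)⁆ ⁅[R w* G], u(G)⁆`: changing a variable of `u` multiplies `⁅a, b⁆`
by `⁅a' a⁻¹, a b a⁻¹⁆`, changing one of `w` multiplies it by a conjugate of
`⁅b' b⁻¹, b a⁻¹ b⁻¹⁆`, and since the two words can be evaluated independently, every commutator
of a generator of `[R u* G]` with a value of `w` (and symmetrically) is obtained this way.

The nilpotency word satisfies `[x₀, …, x_{c+1}] = ⁅[x₀, …, x_c], x_{c+1}⁆`, so induction gives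
`γ_{c+1}(G)` and `[R, _c G]` for it; the extra term `⁅R, γ_{c+1}(G)⁆` lies in `[R, _{c+1} G]` by
the three subgroups lemma.
-/

namespace PaperFormal

open Subgroup

open scoped commutatorElement

/-- The set of values of the words in `V` in the group `G`. -/
def wordValues {α : Type*} (V : Set (FreeGroup α)) (G : Type*) [Group G] : Set G :=
  {g | ∃ v ∈ V, ∃ f : α → G, FreeGroup.lift f v = g}

/-- The verbal subgroup `V(G)` of `G` with respect to a set of words `V`. -/
def verbal {α : Type*} (V : Set (FreeGroup α)) (G : Type*) [Group G] : Subgroup G :=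
  Subgroup.closure (wordValues V G)

/-- The marginal set `V*(G)`: the set of `g ∈ G` such that replacing any single entry
`gᵢ` by `gᵢ * g` does not change the value of any word `v ∈ V`. -/
def marginalSet {α : Type*} [DecidableEq α] (V : Set (FreeGroup α)) (G : Type*) [Group G] :
    Set G :=
  {g | ∀ v ∈ V, ∀ f : α → G, ∀ i : α,
    FreeGroup.lift (Function.update f i (f i * g)) v = FreeGroup.lift f v}

/-- The subgroup `[K V* G]`. -/
def KVstar {α : Type*} [DecidableEq α] (V : Set (FreeGroup α)) {G : Type*} [Group G]
    (K : Subgroup G) : Subgroup G :=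
  Subgroup.closure {x | ∃ v ∈ V, ∃ f : α → G, ∃ i : α, ∃ r ∈ K,
    x = FreeGroup.lift (Function.update f i (f i * r)) v * (FreeGroup.lift f v)⁻¹}

/-- The quotient group `A/B`, for subgroups `A B` of an ambient group (mathematically
meaningful when `B` is a subgroup of `A` normalized by `A`; we take the normal closure of
`B ∩ A` inside `A`, which equals `B` in that case). -/
abbrev quotBy {G : Type*} [Group G] (A B : Subgroup G) : Type _ :=
  ↥A ⧸ Subgroup.normalClosure ((B.subgroupOf A : Subgroup ↥A) : Set ↥A)

/-- The canonical projection onto `quotBy A B`. -/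
def quotByMk {G : Type*} [Group G] {A : Subgroup G} (B : Subgroup G) (a : ↥A) :
    quotBy A B := QuotientGroup.mk a

/-- The natural homomorphism `A/B → A'/B'` when `A ≤ A'` and `B ≤ B'`. -/
def quotByHom {G : Type*} [Group G] {A A' B B' : Subgroup G} (hA : A ≤ A') (hB : B ≤ B') :
    quotBy A B →* quotBy A' B' :=
  QuotientGroup.lift _ ((QuotientGroup.mk' _).comp (Subgroup.inclusion hA)) (by
    intro x hx
    have : x ∈ ((QuotientGroup.mk' (Subgroup.normalClosure
        ((B'.subgroupOf A' : Subgroup ↥A') : Set ↥A'))).comp (Subgroup.inclusion hA)).ker := by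
      refine Subgroup.normalClosure_le_normal ?_ hx
      intro y hy
      simp only [SetLike.mem_coe, Subgroup.mem_subgroupOf] at hy
      simp only [SetLike.mem_coe, MonoidHom.mem_ker, MonoidHom.comp_apply,
        QuotientGroup.mk'_apply]
      rw [QuotientGroup.eq_one_iff]
      refine Subgroup.subset_normalClosure ?_
      simp only [SetLike.mem_coe, Subgroup.mem_subgroupOf, Subgroup.coe_inclusion]
      exact hB hy
    exact this)

/-- The Baer invariant `𝔙M(G) = (R ∩ V(F))/[R V* F]` of `G ≅ F/R` with respect to the
set of words `V`. -/
abbrev BaerInv {α : Type*} [DecidableEq α] (V : Set (FreeGroup α)) {F : Type*} [Group F]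
    (R : Subgroup F) : Type _ :=
  quotBy (R ⊓ verbal V F) (KVstar V R)

/-- The natural homomorphism `𝔙M(F/R) → 𝔙M(F/S)` for `R ≤ S`. -/
def baerMap {α : Type*} [DecidableEq α] (V : Set (FreeGroup α)) {F : Type*} [Group F]
    {R S : Subgroup F} (h : R ≤ S) : BaerInv V R →* BaerInv V S :=
  quotByHom (inf_le_inf_right _ h) (Subgroup.closure_mono (by
    rintro x ⟨v, hv, f, i, r, hr, rfl⟩
    exact ⟨v, hv, f, i, r, h hr, rfl⟩))

/-- A group `G` is `V`-capable if `G ≅ E/V*(E)` for some group `E`; equivalently there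
is a surjection `E → G` whose kernel is exactly the marginal subgroup `V*(E)`. -/
def VCapable {α : Type*} [DecidableEq α] (V : Set (FreeGroup α)) (G : Type*) [Group G] : Prop :=
  ∃ (E : Type*) (_ : Group E) (φ : E →* G),
    Function.Surjective φ ∧ (φ.ker : Set E) = marginalSet V E

/-- A group `G` is capable if `G ≅ E/Z(E)` for some group `E`. -/
def Capable (G : Type*) [Group G] : Prop :=
  ∃ (E : Type*) (_ : Group E) (φ : E →* G),
    Function.Surjective φ ∧ φ.ker = Subgroup.center E

/-- A group `G` is `𝔑_c`-capable if `G ≅ E/Z_c(E)` for some group `E`. -/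
def NCapable (c : ℕ) (G : Type*) [Group G] : Prop :=
  ∃ (E : Type*) (_ : Group E) (φ : E →* G),
    Function.Surjective φ ∧ φ.ker = Subgroup.upperCentralSeries E c

/-- The nilpotency word `[…[[x₀,x₁],x₂],…,x_c]` defining the variety `𝔑_c`. -/
def nilpWord : ℕ → FreeGroup ℕ
  | 0 => FreeGroup.of 0
  | c + 1 => ⁅nilpWord c, FreeGroup.of (c + 1)⁆

/-- The outer commutator word `[[…[x₁,x₂],…,x_{c₁+1}], […[y₁,y₂],…,y_{c₂+1}]]`
(in `c₁+c₂+2` distinct variables) defining the variety `[𝔑_{c₁},𝔑_{c₂}]`. -/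
def outerWord (c₁ c₂ : ℕ) : FreeGroup ℕ :=
  ⁅nilpWord c₁, FreeGroup.map (fun i => i + (c₁ + 1)) (nilpWord c₂)⁆

/-- The solvability word `δ_ℓ` (on `2^ℓ` distinct variables) defining the variety `𝔖_ℓ`. -/
def deltaWord : ℕ → FreeGroup ℕ
  | 0 => FreeGroup.of 0
  | ℓ + 1 => ⁅deltaWord ℓ, FreeGroup.map (fun i => i + 2 ^ ℓ) (deltaWord ℓ)⁆

/-- `[R, F, F, …, F]` with `c` occurrences of `F`. -/
def iterBracket {G : Type*} [Group G] (R : Subgroup G) : ℕ → Subgroup G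
  | 0 => R
  | c + 1 => ⁅iterBracket R c, (⊤ : Subgroup G)⁆

/-- Formal commutators on a set `X` of generators. -/
inductive FC (X : Type*) : Type _
  | of : X → FC X
  | comm : FC X → FC X → FC X

namespace FC

/-- The weight of a formal commutator. -/
def wt {X : Type*} : FC X → ℕ
  | .of _ => 1
  | .comm a b => wt a + wt b

/-- The value of a formal commutator in the free group on `X`. -/
def val {X : Type*} : FC X → FreeGroup X
  | .of x => FreeGroup.of x
  | .comm a b => ⁅val a, val b⁆

/-- Whether the generator `x` occurs in a formal commutator. -/
def occurs {X : Type*} (x : X) : FC X → Prop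
  | .of y => x = y
  | .comm a b => occurs x a ∨ occurs x b

/-- The standard ordering of (basic) commutators: first by weight, commutators of the
same weight being compared lexicographically in their two components. -/
def cmp {X : Type*} [LinearOrder X] : FC X → FC X → Ordering
  | .of x, .of y => compare x y
  | .of x, .comm a b => (compare (wt (FC.of x)) (wt (FC.comm a b))).then .lt
  | .comm a b, .of y => (compare (wt (FC.comm a b)) (wt (FC.of y))).then .gt
  | .comm a b, .comm c d =>
      (compare (wt (FC.comm a b)) (wt (FC.comm c d))).then ((cmp a c).then (cmp b d))

/-- Basic commutators on a totally ordered set `X`: elements of `X` are basic of weight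
one; `[cᵢ,cⱼ]` is basic provided `cᵢ, cⱼ` are basic, `cᵢ > cⱼ`, and if `cᵢ = [c_s,c_t]`
then `cⱼ ≥ c_t`. -/
inductive IsBasic {X : Type*} [LinearOrder X] : FC X → Prop
  | of (x : X) : IsBasic (.of x)
  | comm {ci cj : FC X} : IsBasic ci → IsBasic cj → cmp cj ci = .lt →
      (∀ cs ct : FC X, ci = .comm cs ct → cmp cj ct ≠ .lt) → IsBasic (.comm ci cj)

end FC

/-- `Q` is a free abelian group with basis the subset `s ⊆ Q`. -/
def IsFreeAbelianWithBasis (Q : Type*) [Group Q] (s : Set Q) : Prop :=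
  ∃ e : Q ≃* Multiplicative (FreeAbelianGroup s),
    ∀ (q : Q) (h : q ∈ s), e q = Multiplicative.ofAdd (FreeAbelianGroup.of (⟨q, h⟩ : s))

/-- The Witt function `χ_n(d) = (1/n) ∑_{m ∣ n} μ(m) d^{n/m}`. -/
def chi (n d : ℕ) : ℕ :=
  ((∑ m ∈ n.divisors, (ArithmeticFunction.moebius m) * (d : ℤ) ^ (n / m)) / (n : ℤ)).toNat

section Commutators

variable {G : Type*} [Group G]

theorem commutatorElement_mul_inv_commutatorElement_left (a a' b : G) :
    ⁅a', b⁆ * ⁅a, b⁆⁻¹ = ⁅a' * a⁻¹, a * b * a⁻¹⁆ := by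
  simp only [commutatorElement_def]
  group

theorem commutatorElement_mul_inv_commutatorElement_right (a b b' : G) :
    ⁅a, b'⁆ * ⁅a, b⁆⁻¹ = a * ⁅b' * b⁻¹, b * a⁻¹ * b⁻¹⁆ * a⁻¹ := by
  simp only [commutatorElement_def]
  group

theorem normal_closure_of_conj_mem {S : Set G} (hS : ∀ g, ∀ s ∈ S, g * s * g⁻¹ ∈ S) :
    (closure S).Normal := by
  have : normalClosure S = closure S := by
    refine le_antisymm (closure_mono ?_) closure_le_normalClosure
    intro x hx
    obtain ⟨s, hs, hsx⟩ := Group.mem_conjugatesOfSet_iff.mp hx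
    obtain ⟨c, rfl⟩ := isConj_iff.mp hsx
    exact hS c s hs
  exact this ▸ normalClosure_normal

theorem commutator_closure_le {S T : Set G} {N : Subgroup G} [N.Normal]
    (h : ∀ s ∈ S, ∀ t ∈ T, ⁅s, t⁆ ∈ N) : ⁅closure S, closure T⁆ ≤ N := by
  rw [← QuotientGroup.ker_mk' N, ← Subgroup.map_eq_bot_iff, map_commutator, MonoidHom.map_closure,
    MonoidHom.map_closure, commutator_eq_bot_iff_le_centralizer, centralizer_closure, closure_le]
  rintro _ ⟨s, hs, rfl⟩ _ ⟨t, ht, rfl⟩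
  rw [← commutatorElement_eq_one_iff_mul_comm, ← map_commutatorElement, ← MonoidHom.mem_ker,
    QuotientGroup.ker_mk', ← commutatorElement_inv]
  exact inv_mem (h s hs t ht)

theorem commutator_commutator_le_of_rotate {H₁ H₂ H₃ N : Subgroup G} [N.Normal]
    (h₁ : ⁅⁅H₂, H₃⁆, H₁⁆ ≤ N) (h₂ : ⁅⁅H₃, H₁⁆, H₂⁆ ≤ N) : ⁅⁅H₁, H₂⁆, H₃⁆ ≤ N := by
  simp only [← QuotientGroup.ker_mk' N, ← Subgroup.map_eq_bot_iff, map_commutator] at *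
  exact commutator_commutator_eq_bot_of_rotate h₁ h₂

end Commutators

section Words

variable {G : Type*} [Group G]

theorem lift_map_apply {α β : Type*} (σ : α → β) (f : β → G) (w : FreeGroup α) :
    FreeGroup.lift f (FreeGroup.map σ w) = FreeGroup.lift (f ∘ σ) w := by
  induction w using FreeGroup.induction_on <;> simp_all

theorem map_lift_apply {α H F : Type*} [Group H] [FunLike F G H] [MonoidHomClass F G H] (φ : F)
    (f : α → G) (w : FreeGroup α) : φ (FreeGroup.lift f w) = FreeGroup.lift (φ ∘ f) w :=
  FreeGroup.lift_unique ((φ : G →* H).comp (FreeGroup.lift f)) (by simp)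

variable {α : Type*}

theorem conj_mem_wordValues {V : Set (FreeGroup α)} (g : G) {x : G} (hx : x ∈ wordValues V G) :
    g * x * g⁻¹ ∈ wordValues V G := by
  obtain ⟨v, hv, f, rfl⟩ := hx
  exact ⟨v, hv, MulAut.conj g ∘ f, by rw [← map_lift_apply, MulAut.conj_apply]⟩

theorem wordValues_singleton (v : FreeGroup α) :
    wordValues {v} G = Set.range fun f : α → G => FreeGroup.lift f v := by
  ext
  simp [wordValues]

instance verbal_normal (V : Set (FreeGroup α)) : (verbal V G).Normal :=
  normal_closure_of_conj_mem fun g _ => conj_mem_wordValues g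

theorem lift_mem_verbal {v : FreeGroup α} {V : Set (FreeGroup α)} (hv : v ∈ V) (f : α → G) :
    FreeGroup.lift f v ∈ verbal V G :=
  subset_closure ⟨v, hv, f, rfl⟩

variable [DecidableEq α]

theorem mem_KVstar {v : FreeGroup α} {V : Set (FreeGroup α)} (hv : v ∈ V) {K : Subgroup G}
    (f : α → G) (i : α) {r : G} (hr : r ∈ K) :
    FreeGroup.lift (Function.update f i (f i * r)) v * (FreeGroup.lift f v)⁻¹ ∈ KVstar V K :=
  subset_closure ⟨v, hv, f, i, r, hr, rfl⟩

instance KVstar_normal (V : Set (FreeGroup α)) (R : Subgroup G) [R.Normal] :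
    (KVstar V R).Normal := by
  refine normal_closure_of_conj_mem ?_
  rintro g _ ⟨v, hv, f, i, r, hr, rfl⟩
  refine ⟨v, hv, MulAut.conj g ∘ f, i, MulAut.conj g r, Normal.conj_mem inferInstance r hr g, ?_⟩
  rw [← MulAut.conj_apply, map_mul, map_inv, map_lift_apply, map_lift_apply,
    Function.comp_update, map_mul, Function.comp_apply]

end Words

section Glue

variable {β : Type*}

def glue (n : ℕ) (f g : ℕ → β) : ℕ → β := fun j => if j < n then f j else g (j - n)

theorem glue_of_lt {n j : ℕ} (f g : ℕ → β) (hj : j < n) : glue n f g j = f j := if_pos hj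

theorem glue_add (n j : ℕ) (f g : ℕ → β) : glue n f g (j + n) = g j := by
  simp [glue]

theorem update_glue_of_lt {n i : ℕ} (f g : ℕ → β) (hi : i < n) (x : β) :
    Function.update (glue n f g) i x = glue n (Function.update f i x) g := by
  funext j
  by_cases hj : j < n
  · rcases eq_or_ne j i with rfl | hji
    · simp [glue, hj]
    · simp [glue, hj, hji]
  · simp [glue, hj, show j ≠ i by omega]

theorem update_glue_add (n i : ℕ) (f g : ℕ → β) (x : β) :
    Function.update (glue n f g) (i + n) x = glue n f (Function.update g i x) := by
  funext j
  by_cases hj : j < n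
  · simp [glue, hj, show j ≠ i + n by omega]
  · rcases eq_or_ne j (i + n) with rfl | hji
    · simp [glue]
    · simp [glue, hj, hji, Function.update_of_ne (show j - n ≠ i by omega)]

end Glue

section DisjointCommutator

variable {G : Type*} [Group G] {u w : FreeGroup ℕ} {n : ℕ}

theorem lift_eq_of_mem_closure_of_lt (hu : u ∈ closure (FreeGroup.of '' Set.Iio n))
    {f g : ℕ → G} (h : ∀ j < n, f j = g j) : FreeGroup.lift f u = FreeGroup.lift g u :=
  MonoidHom.eqOn_closure (by rintro _ ⟨j, hj, rfl⟩; simpa using h j hj) hu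

theorem lift_update_eq_of_le (hu : u ∈ closure (FreeGroup.of '' Set.Iio n)) {i : ℕ}
    (hi : n ≤ i) (f : ℕ → G) (x : G) :
    FreeGroup.lift (Function.update f i x) u = FreeGroup.lift f u :=
  lift_eq_of_mem_closure_of_lt hu fun _ hj => Function.update_of_ne (by omega) _ _

theorem lift_commutator_map_add (f : ℕ → G) :
    FreeGroup.lift f ⁅u, FreeGroup.map (· + n) w⁆ =
      ⁅FreeGroup.lift f u, FreeGroup.lift (fun j => f (j + n)) w⁆ := by
  rw [map_commutatorElement, lift_map_apply]
  rfl

theorem lift_glue_commutator_map_add (hu : u ∈ closure (FreeGroup.of '' Set.Iio n))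
    (f g : ℕ → G) :
    FreeGroup.lift (glue n f g) ⁅u, FreeGroup.map (· + n) w⁆ =
      ⁅FreeGroup.lift f u, FreeGroup.lift g w⁆ := by
  rw [lift_commutator_map_add, lift_eq_of_mem_closure_of_lt hu fun j hj => glue_of_lt f g hj]
  simp only [glue_add]

theorem verbal_commutator_map_add (hu : u ∈ closure (FreeGroup.of '' Set.Iio n)) :
    verbal {(⁅u, FreeGroup.map (· + n) w⁆ : FreeGroup ℕ)} G = ⁅verbal {u} G, verbal {w} G⁆ := by
  refine le_antisymm ((closure_le _).mpr ?_) (commutator_closure_le ?_)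
  · rw [wordValues_singleton, Set.range_subset_iff]
    intro f
    rw [lift_commutator_map_add]
    exact commutator_mem_commutator (lift_mem_verbal (Set.mem_singleton u) f)
      (lift_mem_verbal (Set.mem_singleton w) _)
  · simp only [wordValues_singleton]
    rintro _ ⟨f, rfl⟩ _ ⟨g, rfl⟩
    rw [← lift_glue_commutator_map_add hu f g]
    exact lift_mem_verbal (Set.mem_singleton _) _

theorem KVstar_commutator_map_add_le (hu : u ∈ closure (FreeGroup.of '' Set.Iio n))
    (R : Subgroup G) [R.Normal] :
    KVstar {(⁅u, FreeGroup.map (· + n) w⁆ : FreeGroup ℕ)} R ≤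
      ⁅KVstar {u} R, verbal {w} G⁆ ⊔ ⁅KVstar {w} R, verbal {u} G⁆ := by
  refine (closure_le _).mpr ?_
  rintro _ ⟨v, hv, f, i, r, hr, rfl⟩
  rw [Set.mem_singleton_iff] at hv
  subst v
  rw [lift_commutator_map_add, lift_commutator_map_add]
  rcases lt_or_ge i n with hi | hi
  · have hw : (fun j => Function.update f i (f i * r) (j + n)) = fun j => f (j + n) :=
      funext fun j => Function.update_of_ne (by omega) _ _
    rw [hw, commutatorElement_mul_inv_commutatorElement_left]
    exact mem_sup_left (commutator_mem_commutator (mem_KVstar (Set.mem_singleton u) f i hr)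
      (Normal.conj_mem inferInstance _ (lift_mem_verbal (Set.mem_singleton w) _) _))
  · obtain ⟨k, rfl⟩ : ∃ k, i = k + n := ⟨i - n, by omega⟩
    have hw : (fun j => Function.update f (k + n) (f (k + n) * r) (j + n)) =
        Function.update (fun j => f (j + n)) k (f (k + n) * r) :=
      Function.update_comp_eq_of_injective f (add_left_injective n) k _
    rw [lift_update_eq_of_le hu (Nat.le_add_left n k), hw,
      commutatorElement_mul_inv_commutatorElement_right]
    exact mem_sup_right (Normal.conj_mem inferInstance _ (commutator_mem_commutator
      (mem_KVstar (Set.mem_singleton w) (fun j => f (j + n)) k hr)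
      (Normal.conj_mem inferInstance _ (inv_mem (lift_mem_verbal (Set.mem_singleton u) f)) _)) _)

theorem commutator_KVstar_left_le (hu : u ∈ closure (FreeGroup.of '' Set.Iio n))
    (R : Subgroup G) [R.Normal] :
    ⁅KVstar {u} R, verbal {w} G⁆ ≤ KVstar {(⁅u, FreeGroup.map (· + n) w⁆ : FreeGroup ℕ)} R := by
  refine commutator_closure_le ?_
  simp only [wordValues_singleton, Set.forall_mem_range]
  rintro _ ⟨v, hv, f, i, r, hr, rfl⟩ g
  rw [Set.mem_singleton_iff] at hv
  subst v
  rcases lt_or_ge i n with hi | hi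
  · -- the `w`-variables take the values of `g` conjugated by `(u f)⁻¹`, which makes the
    -- generator of `[R v* G]` at the modified `i`-th variable equal to the commutator
    have hgen := mem_KVstar (Set.mem_singleton (⁅u, FreeGroup.map (· + n) w⁆ : FreeGroup ℕ))
      (glue n f (MulAut.conj (FreeGroup.lift f u)⁻¹ ∘ g)) i hr
    rw [update_glue_of_lt _ _ hi, glue_of_lt _ _ hi, lift_glue_commutator_map_add hu,
      lift_glue_commutator_map_add hu, ← map_lift_apply,
      commutatorElement_mul_inv_commutatorElement_left, MulAut.conj_apply] at hgen
    convert hgen using 2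
    group
  · rw [lift_update_eq_of_le hu hi, mul_inv_cancel, commutatorElement_one_left]
    exact one_mem _

theorem commutator_KVstar_right_le (hu : u ∈ closure (FreeGroup.of '' Set.Iio n))
    (R : Subgroup G) [R.Normal] :
    ⁅KVstar {w} R, verbal {u} G⁆ ≤ KVstar {(⁅u, FreeGroup.map (· + n) w⁆ : FreeGroup ℕ)} R := by
  refine commutator_closure_le ?_
  simp only [wordValues_singleton, Set.forall_mem_range]
  rintro _ ⟨v, hv, g, k, r, hr, rfl⟩ f
  rw [Set.mem_singleton_iff] at hv
  subst v
  set b := FreeGroup.lift g w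
  -- now the `u`-variables are conjugated by `b⁻¹`, and the generator of `[R v* G]` becomes a
  -- conjugate of the inverse of the commutator
  have hgen := mem_KVstar (Set.mem_singleton (⁅u, FreeGroup.map (· + n) w⁆ : FreeGroup ℕ))
    (glue n (MulAut.conj b⁻¹ ∘ f) g) (k + n) hr
  rw [update_glue_add, glue_add, lift_glue_commutator_map_add hu,
    lift_glue_commutator_map_add hu, ← map_lift_apply, MulAut.conj_apply] at hgen
  set a := b⁻¹ * FreeGroup.lift f u * b⁻¹⁻¹
  set b' := FreeGroup.lift (Function.update g k (g k * r)) w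
  have key : ⁅b' * b⁻¹, FreeGroup.lift f u⁆ = ⁅b', a⁆ * (⁅a, b'⁆ * ⁅a, b⁆⁻¹)⁻¹ * ⁅b', a⁆⁻¹ := by
    simp only [a, commutatorElement_def]
    group
  rw [key]
  exact Normal.conj_mem inferInstance _ (inv_mem hgen) _

theorem KVstar_commutator_map_add (hu : u ∈ closure (FreeGroup.of '' Set.Iio n))
    (R : Subgroup G) [R.Normal] :
    KVstar {(⁅u, FreeGroup.map (· + n) w⁆ : FreeGroup ℕ)} R =
      ⁅KVstar {u} R, verbal {w} G⁆ ⊔ ⁅KVstar {w} R, verbal {u} G⁆ :=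
  le_antisymm (KVstar_commutator_map_add_le hu R)
    (sup_le (commutator_KVstar_left_le hu R) (commutator_KVstar_right_le hu R))

end DisjointCommutator

section Generator

variable {G α : Type*} [Group G]

theorem verbal_of (x : α) : verbal {FreeGroup.of x} G = ⊤ := by
  refine eq_top_iff.mpr fun g _ => ?_
  simpa using lift_mem_verbal (G := G) (Set.mem_singleton (FreeGroup.of x)) fun _ => g

theorem KVstar_of [DecidableEq α] (x : α) (R : Subgroup G) [R.Normal] :
    KVstar {FreeGroup.of x} R = R := by
  refine le_antisymm ((closure_le _).mpr ?_) fun r hr => ?_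
  · rintro _ ⟨v, hv, f, i, r, hr, rfl⟩
    rw [Set.mem_singleton_iff] at hv
    subst v
    rcases eq_or_ne x i with rfl | hi
    · simpa [mul_assoc] using Normal.conj_mem inferInstance r hr (f x)
    · simp [Function.update_of_ne hi]
  · simpa using mem_KVstar (Set.mem_singleton (FreeGroup.of x)) 1 x hr

end Generator

section Nilpotent

variable {G : Type*} [Group G]

theorem nilpWord_succ (c : ℕ) :
    nilpWord (c + 1) = ⁅nilpWord c, FreeGroup.map (· + (c + 1)) (FreeGroup.of 0)⁆ := by
  simp [nilpWord, FreeGroup.map.of]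

theorem nilpWord_mem_closure (c : ℕ) : nilpWord c ∈ closure (FreeGroup.of '' Set.Iio (c + 1)) := by
  induction c with
  | zero => exact subset_closure ⟨0, by simp, rfl⟩
  | succ c ih =>
    have hle : closure (FreeGroup.of '' Set.Iio (c + 1)) ≤
        closure (FreeGroup.of '' Set.Iio (c + 2)) :=
      closure_mono (Set.image_mono (Set.Iio_subset_Iio (by omega)))
    exact Subgroup.commutator_le_self _
      (commutator_mem_commutator (hle ih) (subset_closure ⟨c + 1, by simp, rfl⟩))

theorem verbal_nilpWord (c : ℕ) :
    verbal {nilpWord c} G = (⊤ : Subgroup G).lowerCentralSeries c := by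
  induction c with
  | zero => exact verbal_of 0
  | succ c ih =>
    rw [nilpWord_succ, verbal_commutator_map_add (nilpWord_mem_closure c), ih, verbal_of]
    rfl

instance iterBracket_normal (R : Subgroup G) [R.Normal] (c : ℕ) : (iterBracket R c).Normal := by
  induction c with
  | zero => assumption
  | succ c ih => exact commutator_normal _ _

theorem iterBracket_commutator_top (R : Subgroup G) (c : ℕ) :
    iterBracket ⁅R, ⊤⁆ c = iterBracket R (c + 1) := by
  induction c with
  | zero => rfl
  | succ c ih => rw [iterBracket, ih]; rfl

theorem commutator_lowerCentralSeries_le_iterBracket (R : Subgroup G) [R.Normal] (c : ℕ) :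
    ⁅R, (⊤ : Subgroup G).lowerCentralSeries c⁆ ≤ iterBracket R (c + 1) := by
  induction c generalizing R with
  | zero => rfl
  | succ c ih =>
    rw [commutator_comm, Subgroup.lowerCentralSeries_succ]
    refine commutator_commutator_le_of_rotate ?_ ?_
    · rw [commutator_comm ⊤ R, ← iterBracket_commutator_top]
      exact ih _
    · exact commutator_mono (ih R) le_rfl

theorem KVstar_nilpWord (R : Subgroup G) [R.Normal] (c : ℕ) :
    KVstar {nilpWord c} R = iterBracket R c := by
  induction c with
  | zero => exact KVstar_of 0 R
  | succ c ih =>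
    rw [nilpWord_succ, KVstar_commutator_map_add (nilpWord_mem_closure c), ih, KVstar_of,
      verbal_of, verbal_nilpWord]
    exact sup_eq_left.mpr (commutator_lowerCentralSeries_le_iterBracket R c)

end Nilpotent

theorem statement_19_general {X : Type*} (c₁ c₂ : ℕ)
    (R : Subgroup (FreeGroup X)) [R.Normal] :
    Nonempty (BaerInv {outerWord c₁ c₂} R ≃*
      quotBy
        (R ⊓ ⁅(⊤ : Subgroup (FreeGroup X)).lowerCentralSeries c₁, (⊤ : Subgroup (FreeGroup X)).lowerCentralSeries c₂⁆)
        (⁅iterBracket R c₁, (⊤ : Subgroup (FreeGroup X)).lowerCentralSeries c₂⁆ ⊔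
         ⁅iterBracket R c₂, (⊤ : Subgroup (FreeGroup X)).lowerCentralSeries c₁⁆)) := by
  have hu := nilpWord_mem_closure c₁
  unfold BaerInv
  rw [outerWord, verbal_commutator_map_add hu, KVstar_commutator_map_add hu,
    verbal_nilpWord, verbal_nilpWord, KVstar_nilpWord, KVstar_nilpWord]
  exact ⟨MulEquiv.refl _⟩

/-- Let `c₁, c₂ ≥ 1` and let `v` be the outer commutator word
defining `[𝔑_{c₁},𝔑_{c₂}]`. For any group `G` with free presentation `G ≅ F/R`, the
Baer invariant `(R ∩ v(F))/[R v* F]` of `G` with respect to `[𝔑_{c₁},𝔑_{c₂}]` is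
isomorphic to
`(R ∩ [γ_{c₁+1}(F), γ_{c₂+1}(F)]) / ([R, _{c₁}F, γ_{c₂+1}(F)]·[R, _{c₂}F, γ_{c₁+1}(F)])`
(the product of these two normal subgroups being their join; recall `γ_{c+1}(F)` is
`lowerCentralSeries F c` in Mathlib's indexing). -/
theorem statement_19 {X : Type*} (c₁ c₂ : ℕ) (hc₁ : 1 ≤ c₁) (hc₂ : 1 ≤ c₂)
    (R : Subgroup (FreeGroup X)) [R.Normal] :
    Nonempty (BaerInv {outerWord c₁ c₂} R ≃*
      quotBy
        (R ⊓ ⁅(⊤ : Subgroup (FreeGroup X)).lowerCentralSeries c₁, (⊤ : Subgroup (FreeGroup X)).lowerCentralSeries c₂⁆)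
        (⁅iterBracket R c₁, (⊤ : Subgroup (FreeGroup X)).lowerCentralSeries c₂⁆ ⊔
         ⁅iterBracket R c₂, (⊤ : Subgroup (FreeGroup X)).lowerCentralSeries c₁⁆)) :=
  statement_19_general c₁ c₂ R

end PaperFormal
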